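/- Let G and H be metrizable topological groups, U ⊆ G and V ⊆ H open subsets, and E a locally convex space. Then the map f ↦ f^∨, where f^∨(x) := f(x,·), is a bijection from the set of C^{1,0}-maps U × V → E onto the set of C¹-maps U → C(V,E) (with C(V,E) carrying the compact-open topology); in particular, for every C¹-map g : U → C(V,E), the map g^∧ : U × V → E, (x,y) ↦ g(x)(y), is C^{1,0}. -/

import Mathlib

open Filter Topology Set

/-- The set of continuous one-parameter subgroups `γ : (ℝ,+) → G`, as a subtype of `C(ℝ, G)`
(hence endowed with the compact-open topology). -/
abbrev OneParam (G : Type*) [TopologicalSpace G] [Group G] : Type _ :=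
  {γ : C(ℝ, G) // ∀ s t : ℝ, γ (s + t) = γ s * γ t}

/-- `D_γ f(x) = v`, i.e. `(1/t)(f(x·γ(t)) − f(x)) → v` as `t → 0` (for maps into any
Hausdorff topological `ℝ`-vector space, such as `C(V,E)` with the compact-open topology). -/
def HasDirDeriv {G E : Type*} [TopologicalSpace G] [Group G]
    [AddCommGroup E] [Module ℝ E] [TopologicalSpace E]
    (f : G → E) (x : G) (γ : OneParam G) (v : E) : Prop :=
  Tendsto (fun t : ℝ => t⁻¹ • (f (x * γ.1 t) - f x)) (𝓝[≠] (0 : ℝ)) (𝓝 v)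

/-- `g` is a `C¹`-map on `U` (into a topological vector space). -/
def IsC1 {G F : Type*} [TopologicalSpace G] [Group G]
    [AddCommGroup F] [Module ℝ F] [TopologicalSpace F]
    (g : G → F) (U : Set G) : Prop :=
  ContinuousOn g U ∧
  ∃ dg : G → OneParam G → F,
    (∀ x ∈ U, ∀ γ : OneParam G, HasDirDeriv g x γ (dg x γ)) ∧
    ContinuousOn (fun p : G × OneParam G => dg p.1 p.2) (U ×ˢ (univ : Set (OneParam G)))

/-- `f` is a `C^{1,0}`-map on `U × V`. -/
def IsC10 {G H E : Type*} [TopologicalSpace G] [Group G] [TopologicalSpace H]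
    [AddCommGroup E] [Module ℝ E] [TopologicalSpace E]
    (f : G → H → E) (U : Set G) (V : Set H) : Prop :=
  ContinuousOn (fun p : G × H => f p.1 p.2) (U ×ˢ V) ∧
  ∃ d10 : G → H → OneParam G → E,
    (∀ x ∈ U, ∀ y ∈ V, ∀ γ : OneParam G,
      HasDirDeriv (fun x' => f x' y) x γ (d10 x y γ)) ∧
    ContinuousOn (fun p : G × H × OneParam G => d10 p.1 p.2.1 p.2.2)
      (U ×ˢ V ×ˢ (univ : Set (OneParam G)))

open scoped Classical in
/-- The map `F ↦ F^∨` on functions `U × V → E`, with values in functions `U → C(V,E)`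
(defined to be `0` where the slice is not continuous). -/
noncomputable def Phi {G H E : Type*} [TopologicalSpace G] [TopologicalSpace H]
    [AddCommGroup E] [TopologicalSpace E] [IsTopologicalAddGroup E]
    {U : Set G} {V : Set H} (F : ↥U × ↥V → E) : ↥U → C(↥V, E) := fun u =>
  if h : Continuous fun v : ↥V => F (u, v) then ⟨fun v => F (u, v), h⟩ else 0

/-!
Continuity of `f^∨` for continuous `f` is the easy half of the exponential law for the
compact-open topology; the content lies in the derivatives and in the continuity of uncurried maps.

For a `C^{1,0}`-map `f`, the difference quotients of `f^∨` along `γ` must converge to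
`(d^{(1,0)}f)^∨` uniformly on compact subsets of `V`. A mean value theorem, valid in locally
convex spaces by Hahn–Banach, puts each difference quotient into every closed convex set
containing the nearby values of `d^{(1,0)}f`; continuity of `d^{(1,0)}f` and the tube lemma give
the uniformity.

For a `C¹`-map `g`, `V` need not be locally compact, so evaluation `C(V,E) × V → E` need not be
continuous. It is continuous along convergent sequences, since such a sequence together with its
limit is compact, and this suffices for `g^∧` and its partial differential because `U × V` and
`U × V × 𝔏(G)` are first countable.
-/

theorem exists_mem_nhds_isClosed_convex_subset {E : Type*} [AddCommGroup E] [Module ℝ E]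
    [TopologicalSpace E] [IsTopologicalAddGroup E] [ContinuousConstSMul ℝ E]
    [LocallyConvexSpace ℝ E] {p : E} {W : Set E} (hW : W ∈ 𝓝 p) :
    ∃ S ∈ 𝓝 p, IsClosed S ∧ Convex ℝ S ∧ S ⊆ W := by
  obtain ⟨C, hC, hCcl, hCW⟩ := exists_mem_nhds_isClosed_subset hW
  obtain ⟨D, ⟨hD, hDconv⟩, hDC⟩ := (LocallyConvexSpace.convex_basis (𝕜 := ℝ) p).mem_iff.mp hC
  exact ⟨closure D, mem_of_superset hD subset_closure, isClosed_closure, hDconv.closure,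
    (hCcl.closure_subset_iff.mpr hDC).trans hCW⟩

theorem exists_mem_uIoo_hasDerivAt_eq_slope {φ φ' : ℝ → ℝ} {a b : ℝ} (hab : a ≠ b)
    (hc : ContinuousOn φ (uIcc a b)) (hd : ∀ s ∈ uIoo a b, HasDerivAt φ (φ' s) s) :
    ∃ c ∈ uIoo a b, φ' c = slope φ a b := by
  wlog h : a < b generalizing a b
  · rw [uIcc_comm] at hc
    rw [uIoo_comm] at hd ⊢
    rw [slope_comm]
    exact this hab.symm hc hd (hab.lt_or_gt.resolve_left h)
  rw [uIcc_of_le h.le] at hc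
  rw [uIoo_of_le h.le] at hd ⊢
  rw [slope_def_field]
  exact exists_hasDerivAt_eq_slope φ φ' h hc hd

theorem Convex.slope_mem_of_forall_deriv_mem {E : Type*} [AddCommGroup E] [Module ℝ E]
    [TopologicalSpace E] [IsTopologicalAddGroup E] [ContinuousSMul ℝ E]
    [LocallyConvexSpace ℝ E] {S : Set E} (hS : Convex ℝ S) (hScl : IsClosed S)
    {ψ d : ℝ → E} {a b : ℝ} (hab : a ≠ b) (hc : ContinuousOn ψ (uIcc a b))
    (hd : ∀ s ∈ uIoo a b, Tendsto (fun r : ℝ => r⁻¹ • (ψ (s + r) - ψ s)) (𝓝[≠] 0) (𝓝 (d s)))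
    (hdS : ∀ s ∈ uIoo a b, d s ∈ S) :
    slope ψ a b ∈ S := by
  by_contra hmem
  obtain ⟨l, u, hlS, hlu⟩ := geometric_hahn_banach_closed_point hS hScl hmem
  have hderiv : ∀ s ∈ uIoo a b, HasDerivAt (l ∘ ψ) (l (d s)) s := fun s hs => by
    rw [hasDerivAt_iff_tendsto_slope_zero]
    simpa only [Function.comp_def, map_smul, map_sub, smul_eq_mul] using
      (l.continuous.tendsto _).comp (hd s hs)
  obtain ⟨c, hc, hlc⟩ :=
    exists_mem_uIoo_hasDerivAt_eq_slope hab (l.continuous.comp_continuousOn hc) hderiv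
  have : l (slope ψ a b) = slope (l ∘ ψ) a b := by
    simp only [slope_def_module, map_smul, map_sub, Function.comp_apply]
  linarith [hlS _ (hdS c hc)]

theorem Filter.Eventually.forall_uIcc_prod {Y : Type*} [TopologicalSpace Y] {a : ℝ} {y : Y}
    {P : ℝ → Y → Prop} (h : ∀ᶠ p : ℝ × Y in 𝓝 (a, y), P p.1 p.2) :
    ∀ᶠ p : ℝ × Y in 𝓝 (a, y), ∀ s ∈ uIcc a p.1, P s p.2 := by
  rw [nhds_prod_eq] at h ⊢
  obtain ⟨pa, hpa, pb, hpb, hP⟩ := eventually_prod_iff.mp h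
  have hpa' : ∀ᶠ t in 𝓝 a, ∀ s ∈ uIcc a t, pa s :=
    (tendsto_const_nhds.uIcc tendsto_id).eventually hpa.smallSets
  exact (hpa'.prod_mk hpb).mono fun p hp s hs => hP (hp.1 s hs) hp.2

theorem ContinuousMap.tendsto_apply_of_tendsto_atTop {Y Z : Type*} [TopologicalSpace Y]
    [TopologicalSpace Z] {g : ℕ → C(Y, Z)} {v : ℕ → Y} {g₀ : C(Y, Z)} {v₀ : Y}
    (hg : Tendsto g atTop (𝓝 g₀)) (hv : Tendsto v atTop (𝓝 v₀)) :
    Tendsto (fun n => g n (v n)) atTop (𝓝 (g₀ v₀)) := by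
  refine (nhds_basis_opens _).tendsto_right_iff.mpr fun W ⟨hW₀, hW⟩ => ?_
  obtain ⟨m, hm⟩ :=
    eventually_atTop.mp (hv.eventually_mem ((hW.preimage g₀.continuous).mem_nhds hW₀))
  set K := insert v₀ (range fun k => v (k + m))
  have hK : IsCompact K := (hv.comp (tendsto_add_atTop_nat m)).isCompact_insert_range
  have hKW : MapsTo g₀ K W := by
    rintro _ (rfl | ⟨k, rfl⟩)
    exacts [hW₀, hm _ le_add_self]
  filter_upwards [ContinuousMap.tendsto_nhds_compactOpen.mp hg K hK W hW hKW,
    eventually_ge_atTop m] with n hn hnm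
  exact hn (mem_insert_of_mem _ ⟨n - m, by simp only [Nat.sub_add_cancel hnm]⟩)

theorem Continuous.eval_of_sequentialSpace {X Y Z : Type*} [TopologicalSpace X]
    [SequentialSpace X] [TopologicalSpace Y] [TopologicalSpace Z] {φ : X → C(Y, Z)}
    {π : X → Y} (hφ : Continuous φ) (hπ : Continuous π) :
    Continuous fun p => φ p (π p) :=
  continuous_iff_seqContinuous.mpr fun _ _ hu =>
    ContinuousMap.tendsto_apply_of_tendsto_atTop ((hφ.tendsto _).comp hu) ((hπ.tendsto _).comp hu)

namespace OneParam

variable {G : Type*} [TopologicalSpace G] [Group G]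

theorem apply_zero (γ : OneParam G) : γ.1 0 = 1 :=
  left_eq_mul.mp (by simpa only [add_zero] using γ.2 0 0)

theorem mul_apply_add (x : G) (γ : OneParam G) (s r : ℝ) :
    x * γ.1 (s + r) = x * γ.1 s * γ.1 r := by
  rw [γ.2, mul_assoc]

instance [FirstCountableTopology C(ℝ, G)] : FirstCountableTopology (OneParam G) :=
  TopologicalSpace.firstCountableTopology_induced _ _ Subtype.val

end OneParam

theorem HasDirDeriv.tendsto_slope_along {G E : Type*} [TopologicalSpace G] [Group G]
    [AddCommGroup E] [Module ℝ E] [TopologicalSpace E] {h : G → E} {x : G}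
    {γ : OneParam G} {s : ℝ} {v : E} (hd : HasDirDeriv h (x * γ.1 s) γ v) :
    Tendsto (fun r : ℝ => r⁻¹ • (h (x * γ.1 (s + r)) - h (x * γ.1 s))) (𝓝[≠] 0) (𝓝 v) := by
  simpa only [HasDirDeriv, OneParam.mul_apply_add] using hd

theorem HasDirDeriv.apply {G Y E : Type*} [TopologicalSpace G] [Group G] [TopologicalSpace Y]
    [AddCommGroup E] [Module ℝ E] [TopologicalSpace E] [IsTopologicalAddGroup E]
    [ContinuousConstSMul ℝ E] {g : G → C(Y, E)} {x : G} {γ : OneParam G} {L : C(Y, E)}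
    (hd : HasDirDeriv g x γ L) (y : Y) :
    HasDirDeriv (fun x' => g x' y) x γ (L y) :=
  ((continuous_eval_const y).tendsto L).comp hd

theorem ContinuousOn.continuous_slice {X Y E : Type*} [TopologicalSpace X] [TopologicalSpace Y]
    [TopologicalSpace E] {f : X → Y → E} {U : Set X} {V : Set Y}
    (hf : ContinuousOn (fun p : X × Y => f p.1 p.2) (U ×ˢ V)) {x : X} (hx : x ∈ U) :
    Continuous fun v : ↥V => f x v :=
  hf.comp_continuous (f := fun v : ↥V => (x, (v : Y))) (by fun_prop) fun v => ⟨hx, v.2⟩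

section CurryOn

variable {X Y E : Type*} [TopologicalSpace Y] [TopologicalSpace E]

open scoped Classical in
/-- `f^∨ : x ↦ f(x, ·)|_V`, with the junk value `0` wherever that slice is not continuous. -/
noncomputable def curryOn [Zero E] (f : X → Y → E) (V : Set Y) : X → C(↥V, E) := fun x =>
  if h : Continuous fun v : ↥V => f x v then ⟨fun v => f x v, h⟩ else 0

open scoped Classical in
/-- `g^∧ : (x, y) ↦ g(x)(y)`, extended by `0` outside `V`. -/
noncomputable def uncurryOn [Zero E] {V : Set Y} (g : X → C(↥V, E)) : X → Y → E :=
  fun x y => if h : y ∈ V then g x ⟨y, h⟩ else 0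

variable [Zero E] {V : Set Y}

theorem curryOn_apply {f : X → Y → E} {x : X} (h : Continuous fun v : ↥V => f x v) (v : ↥V) :
    curryOn f V x v = f x v := by
  simp only [curryOn, dif_pos h, ContinuousMap.coe_mk]

@[simp]
theorem uncurryOn_apply (g : X → C(↥V, E)) (x : X) (v : ↥V) : uncurryOn g x v = g x v := by
  simp only [uncurryOn, Subtype.coe_prop, dif_pos, Subtype.coe_eta]

theorem curryOn_uncurryOn (g : X → C(↥V, E)) (x : X) : curryOn (uncurryOn g) V x = g x := by
  have hslice : Continuous fun v : ↥V => uncurryOn g x v := by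
    simpa only [uncurryOn_apply] using (g x).continuous
  ext v
  rw [curryOn_apply hslice, uncurryOn_apply]

variable [TopologicalSpace X] {U : Set X}

theorem ContinuousOn.continuousOn_curryOn {f : X → Y → E}
    (hf : ContinuousOn (fun p : X × Y => f p.1 p.2) (U ×ˢ V)) :
    ContinuousOn (curryOn f V) U := by
  have hUV : Continuous fun q : ↥U × ↥V => f q.1 q.2 :=
    hf.comp_continuous (f := fun q : ↥U × ↥V => ((q.1 : X), (q.2 : Y))) (by fun_prop)
      fun q => ⟨q.1.2, q.2.2⟩
  rw [continuousOn_iff_continuous_domRestrict]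
  refine (ContinuousMap.curry ⟨_, hUV⟩).continuous.congr fun u => ?_
  ext v
  rw [domRestrict_apply, curryOn_apply (hf.continuous_slice u.2)]
  rfl

theorem ContinuousOn.uncurryOn [FirstCountableTopology X] {φ : X → C(↥V, E)} {π : X → Y}
    (hφ : ContinuousOn φ U) (hπ : ContinuousOn π U) (hπV : MapsTo π U V) :
    ContinuousOn (fun p => uncurryOn φ p (π p)) U := by
  rw [continuousOn_iff_continuous_domRestrict]
  have hπ' : Continuous fun p : ↥U => (⟨π p, hπV p.2⟩ : ↥V) :=
    (continuousOn_iff_continuous_domRestrict.mp hπ).subtype_mk _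
  refine ((continuousOn_iff_continuous_domRestrict.mp hφ).eval_of_sequentialSpace hπ').congr
    fun p => ?_
  simp only [domRestrict_apply]
  exact (uncurryOn_apply φ p ⟨π p, hπV p.2⟩).symm

end CurryOn

section Differentiation

variable {G H E : Type*} [Group G] [TopologicalSpace G] [ContinuousMul G] [TopologicalSpace H]
  [AddCommGroup E] [Module ℝ E] [TopologicalSpace E] [IsTopologicalAddGroup E]
  [ContinuousSMul ℝ E] [LocallyConvexSpace ℝ E]
  {U : Set G} {V : Set H} {f d : G → H → E} {γ : OneParam G} {x : G}

theorem eventually_smul_sub_mem_of_mem_nhds (hU : IsOpen U)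
    (hf : ContinuousOn (fun p : G × H => f p.1 p.2) (U ×ˢ V))
    (hd : ∀ x ∈ U, ∀ y ∈ V, HasDirDeriv (fun x' => f x' y) x γ (d x y))
    (hdc : ContinuousOn (fun p : G × H => d p.1 p.2) (U ×ˢ V)) (hx : x ∈ U) (v₀ : ↥V)
    {W : Set E} (hW : W ∈ 𝓝 (d x v₀)) :
    ∀ᶠ p : ℝ × ↥V in 𝓝 (0, v₀), x * γ.1 p.1 ∈ U ∧
      (p.1 ≠ 0 → p.1⁻¹ • (f (x * γ.1 p.1) p.2 - f x p.2) ∈ W) := by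
  obtain ⟨S, hS, hScl, hSconv, hSW⟩ := exists_mem_nhds_isClosed_convex_subset hW
  have hcurve : Continuous fun p : ℝ × ↥V => (x * γ.1 p.1, (p.2 : H)) := by fun_prop
  have hΩ : ∀ᶠ p : ℝ × ↥V in 𝓝 (0, v₀), x * γ.1 p.1 ∈ U :=
    (hU.preimage (by fun_prop)).mem_nhds (by simpa [OneParam.apply_zero] using hx)
  have hdS : ∀ᶠ p : ℝ × ↥V in 𝓝 (0, v₀), d (x * γ.1 p.1) p.2 ∈ S := by
    have hcont : ContinuousAt (fun p : ℝ × ↥V => d (x * γ.1 p.1) p.2) (0, v₀) :=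
      (hdc.comp hcurve.continuousOn fun p hp => ⟨hp, p.2.2⟩).continuousAt hΩ
    exact hcont.eventually_mem (by simpa [OneParam.apply_zero] using hS)
  filter_upwards [Filter.Eventually.forall_uIcc_prod
    (P := fun s (v : ↥V) => x * γ.1 s ∈ U ∧ d (x * γ.1 s) v ∈ S) (hΩ.and hdS)] with ⟨t, v⟩ hsegment
  refine ⟨(hsegment t right_mem_uIcc).1, fun ht => hSW ?_⟩
  have hslope := hSconv.slope_mem_of_forall_deriv_mem hScl (ψ := fun s => f (x * γ.1 s) v)
    ht.symm (hf.comp (f := fun s => (x * γ.1 s, (v : H))) (by fun_prop)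
      fun s hs => ⟨(hsegment s hs).1, v.2⟩)
    (fun s hs => (hd _ (hsegment s (uIoo_subset_uIcc_self hs)).1 v v.2).tendsto_slope_along)
    (fun s hs => (hsegment s (uIoo_subset_uIcc_self hs)).2)
  simpa [slope_def_module, OneParam.apply_zero] using hslope

theorem hasDirDeriv_curryOn (hU : IsOpen U)
    (hf : ContinuousOn (fun p : G × H => f p.1 p.2) (U ×ˢ V))
    (hd : ∀ x ∈ U, ∀ y ∈ V, HasDirDeriv (fun x' => f x' y) x γ (d x y))
    (hdc : ContinuousOn (fun p : G × H => d p.1 p.2) (U ×ˢ V)) (hx : x ∈ U) :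
    HasDirDeriv (curryOn f V) x γ (curryOn d V x) := by
  rw [HasDirDeriv, ContinuousMap.tendsto_nhds_compactOpen]
  intro K hK W hW hKW
  have htube : ∀ᶠ t in 𝓝 (0 : ℝ), ∀ v ∈ K,
      x * γ.1 t ∈ U ∧ (t ≠ 0 → t⁻¹ • (f (x * γ.1 t) v - f x v) ∈ W) :=
    hK.eventually_forall_of_forall_eventually fun v₀ hv₀ =>
      eventually_smul_sub_mem_of_mem_nhds hU hf hd hdc hx v₀
        (hW.mem_nhds (by simpa only [curryOn_apply (hdc.continuous_slice hx)] using hKW hv₀))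
  filter_upwards [eventually_nhdsWithin_of_eventually_nhds htube, self_mem_nhdsWithin]
    with t ht (ht0 : t ≠ 0) v hv
  obtain ⟨htU, hquot⟩ := ht v hv
  simpa only [ContinuousMap.smul_apply, ContinuousMap.sub_apply,
    curryOn_apply (hf.continuous_slice htU), curryOn_apply (hf.continuous_slice hx)]
    using hquot ht0

theorem IsC10.isC1_curryOn (hU : IsOpen U) (hf : IsC10 f U V) : IsC1 (curryOn f V) U := by
  obtain ⟨hfc, d, hd, hdc⟩ := hf
  have hdγ (γ : OneParam G) : ContinuousOn (fun p : G × H => d p.1 p.2 γ) (U ×ˢ V) :=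
    hdc.comp (f := fun p : G × H => (p.1, p.2, γ)) (by fun_prop) fun p hp => ⟨hp.1, hp.2, trivial⟩
  have hdc' : ContinuousOn (fun q : (G × OneParam G) × H => d q.1.1 q.2 q.1.2)
      ((U ×ˢ univ) ×ˢ V) :=
    hdc.comp (f := fun q : (G × OneParam G) × H => (q.1.1, q.2, q.1.2)) (by fun_prop)
      fun q hq => ⟨hq.1.1, hq.2, trivial⟩
  exact ⟨hfc.continuousOn_curryOn, fun x γ => curryOn (fun x' y => d x' y γ) V x,
    fun x hx γ => hasDirDeriv_curryOn hU hfc (fun x hx y hy => hd x hx y hy γ) (hdγ γ) hx,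
    hdc'.continuousOn_curryOn (f := fun (q : G × OneParam G) y => d q.1 y q.2)⟩

end Differentiation

section Uncurrying

variable {G H E : Type*} [Group G] [TopologicalSpace G] [TopologicalSpace.MetrizableSpace G]
  [TopologicalSpace H] [FirstCountableTopology H]
  [AddCommGroup E] [Module ℝ E] [TopologicalSpace E] [IsTopologicalAddGroup E]
  [ContinuousConstSMul ℝ E] {U : Set G} {V : Set H}

theorem IsC1.isC10_uncurryOn {g : G → C(↥V, E)} (hg : IsC1 g U) : IsC10 (uncurryOn g) U V := by
  obtain ⟨hgc, dg, hdg, hdgc⟩ := hg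
  refine ⟨?_, fun x y γ => uncurryOn (fun x' => dg x' γ) x y, ?_, ?_⟩
  · exact (hgc.comp continuousOn_fst fun p hp => hp.1).uncurryOn continuousOn_snd
      fun p hp => hp.2
  · intro x hx y hy γ
    lift y to V using hy
    simpa only [uncurryOn_apply] using (hdg x hx γ).apply y
  · have hdg' : ContinuousOn (fun p : G × H × OneParam G => dg p.1 p.2.2)
        (U ×ˢ V ×ˢ (univ : Set (OneParam G))) :=
      hdgc.comp (f := fun p : G × H × OneParam G => (p.1, p.2.2)) (by fun_prop)
        fun p hp => ⟨hp.1, trivial⟩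
    exact hdg'.uncurryOn (π := fun p => p.2.1) (by fun_prop) fun p hp => hp.2.1

end Uncurrying

theorem Phi_eq_curryOn {X Y E : Type*} [TopologicalSpace X] [TopologicalSpace Y]
    [AddCommGroup E] [TopologicalSpace E] [IsTopologicalAddGroup E] {U : Set X} {V : Set Y}
    (f : X → Y → E) : Phi (fun p : ↥U × ↥V => f p.1 p.2) = fun u : ↥U => curryOn f V u :=
  rfl

theorem exp_law_C10_of_metrizable_general
    {G H E : Type*} [Group G] [TopologicalSpace G] [IsTopologicalGroup G]
    [TopologicalSpace H]
    [TopologicalSpace.MetrizableSpace G] [TopologicalSpace.MetrizableSpace H]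
    [AddCommGroup E] [Module ℝ E] [TopologicalSpace E] [IsTopologicalAddGroup E]
    [ContinuousSMul ℝ E] [LocallyConvexSpace ℝ E]
    (U : Set G) (V : Set H) (hU : IsOpen U) :
    Set.BijOn (Phi (E := E) (U := U) (V := V))
      {F : ↥U × ↥V → E | ∃ f : G → H → E,
        IsC10 f U V ∧ ∀ p : ↥U × ↥V, F p = f p.1.1 p.2.1}
      {Γ : ↥U → C(↥V, E) | ∃ g : G → C(↥V, E),
        IsC1 g U ∧ ∀ u : ↥U, Γ u = g u.1} ∧
    (∀ g : G → C(↥V, E), IsC1 g U →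
      ∃ f : G → H → E, IsC10 f U V ∧ ∀ x ∈ U, ∀ v : ↥V, f x v.1 = g x v) := by
  refine ⟨⟨?mapsTo, ?injOn, ?surjOn⟩,
    fun g hg => ⟨uncurryOn g, hg.isC10_uncurryOn, fun x _ v => uncurryOn_apply g x v⟩⟩
  case mapsTo =>
    rintro F ⟨f, hf, hF⟩
    obtain rfl : F = fun p => f p.1 p.2 := funext hF
    exact ⟨curryOn f V, hf.isC1_curryOn hU, congrFun (Phi_eq_curryOn f)⟩
  case injOn =>
    rintro F₁ ⟨f₁, hf₁, hF₁⟩ F₂ ⟨f₂, hf₂, hF₂⟩ hΦ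
    obtain rfl : F₁ = fun p => f₁ p.1 p.2 := funext hF₁
    obtain rfl : F₂ = fun p => f₂ p.1 p.2 := funext hF₂
    funext ⟨u, v⟩
    rw [Phi_eq_curryOn, Phi_eq_curryOn] at hΦ
    have h := DFunLike.congr_fun (congrFun hΦ u) v
    rwa [curryOn_apply (hf₁.1.continuous_slice u.2),
      curryOn_apply (hf₂.1.continuous_slice u.2)] at h
  case surjOn =>
    rintro Γ ⟨g, hg, hΓ⟩
    refine ⟨fun p => uncurryOn g p.1 p.2, ⟨uncurryOn g, hg.isC10_uncurryOn, fun _ => rfl⟩, ?_⟩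
    exact (Phi_eq_curryOn _).trans (funext fun u => (curryOn_uncurryOn g u).trans (hΓ u).symm)

/-- If `G` and `H` are metrizable topological groups, then `f ↦ f^∨` is a
bijection from the set of `C^{1,0}`-maps `U × V → E` onto the set of `C¹`-maps
`U → C(V,E)`; in particular, for every `C¹`-map `g : U → C(V,E)` the map
`g^∧ : U × V → E`, `(x,y) ↦ g(x)(y)`, is `C^{1,0}`. -/
theorem exp_law_C10_of_metrizable
    {G H E : Type*} [Group G] [TopologicalSpace G] [IsTopologicalGroup G]
    [Group H] [TopologicalSpace H] [IsTopologicalGroup H]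
    [TopologicalSpace.MetrizableSpace G] [TopologicalSpace.MetrizableSpace H]
    [AddCommGroup E] [Module ℝ E] [TopologicalSpace E] [IsTopologicalAddGroup E]
    [ContinuousSMul ℝ E] [LocallyConvexSpace ℝ E] [T2Space E]
    (U : Set G) (V : Set H) (hU : IsOpen U) (hV : IsOpen V) :
    Set.BijOn (Phi (E := E) (U := U) (V := V))
      {F : ↥U × ↥V → E | ∃ f : G → H → E,
        IsC10 f U V ∧ ∀ p : ↥U × ↥V, F p = f p.1.1 p.2.1}
      {Γ : ↥U → C(↥V, E) | ∃ g : G → C(↥V, E),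
        IsC1 g U ∧ ∀ u : ↥U, Γ u = g u.1} ∧
    (∀ g : G → C(↥V, E), IsC1 g U →
      ∃ f : G → H → E, IsC10 f U V ∧ ∀ x ∈ U, ∀ v : ↥V, f x v.1 = g x v) :=
  exp_law_C10_of_metrizable_general U V hU
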